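/- Let K be a macroid with generating measure μ and u ∈ S^{n-1}. Then TS(K,u) ≠ {0} if and only if for every c > 0 there exists P ∈ supp μ which does not have a c-cusp in direction u. -/

import Mathlib

open Set MeasureTheory Metric
open scoped Pointwise

noncomputable section

abbrev Euc (n : ℕ) := EuclideanSpace ℝ (Fin n)

/-- Support function of a set. -/
def suppFn {n : ℕ} (K : Set (Euc n)) (u : Euc n) : ℝ :=
  sSup ((fun x => (inner ℝ x u : ℝ)) '' K)

/-- Support set `F(K, u)`. -/
def suppSet {n : ℕ} (K : Set (Euc n)) (u : Euc n) : Set (Euc n) :=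
  {x ∈ K | (inner ℝ x u : ℝ) = suppFn K u}

/-- `F` is a face of the convex set `A`. -/
def IsFaceOf {n : ℕ} (F A : Set (Euc n)) : Prop :=
  F ⊆ A ∧ Convex ℝ F ∧
    ∀ x ∈ A, ∀ y ∈ A, (F ∩ openSegment ℝ x y).Nonempty → segment ℝ x y ⊆ F

/-- Normal cone of `K` at `S`, within the subspace `V`. -/
def normalConeIn {n : ℕ} (V : Submodule ℝ (Euc n)) (K S : Set (Euc n)) : Set (Euc n) :=
  {u | u ∈ V ∧ u ≠ 0 ∧ S ⊆ suppSet K u} ∪ {0}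

/-- `T` is the touching cone of `K` in direction `u` within `V`. -/
def IsTouchingConeIn {n : ℕ} (V : Submodule ℝ (Euc n)) (K : Set (Euc n)) (u : Euc n)
    (T : Set (Euc n)) : Prop :=
  IsFaceOf T (normalConeIn V K (suppSet K u)) ∧ u ∈ intrinsicInterior ℝ T

/-- Orthogonal complement (within `V`) of a set `T`. -/
def orthIn {n : ℕ} (V : Submodule ℝ (Euc n)) (T : Set (Euc n)) : Set (Euc n) :=
  {x | x ∈ V ∧ ∀ t ∈ T, (inner ℝ x t : ℝ) = 0}

/-- Orthogonal projection onto a subspace, as a map of the ambient space. -/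
def projW {n : ℕ} (W : Submodule ℝ (Euc n)) (x : Euc n) : Euc n :=
  (W.orthogonalProjection x : Euc n)

/-- The cone of `c`-cusp directions. -/
def cuspCone {n : ℕ} (c : ℝ) (u : Euc n) : Set (Euc n) :=
  {y | (inner ℝ y u : ℝ) ≤ -c * ‖y‖}

/-- `K` has a `c`-cusp in direction `u`. -/
def HasCusp {n : ℕ} (K : Set (Euc n)) (c : ℝ) (u : Euc n) : Prop :=
  ∃ x ∈ K, K ⊆ x +ᵥ cuspCone c u

/-- `f` is linear on `A`. -/
def LinearOn {n : ℕ} (f : Euc n → ℝ) (A : Set (Euc n)) : Prop :=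
  ∃ w, ∀ x ∈ A, f x = (inner ℝ x w : ℝ)

/-- A tuple of nonempty sets is semicritical. -/
def Semicritical {n ℓ : ℕ} (A : Fin ℓ → Set (Euc n)) : Prop :=
  ∀ I : Finset (Fin ℓ), I.Nonempty →
    I.card ≤ Module.finrank ℝ (Submodule.span ℝ (∑ i ∈ I, (A i - A i)) : Submodule ℝ (Euc n))

/-- Support of a measure on a topological space. -/
def measSupport {α : Type*} [TopologicalSpace α] [MeasurableSpace α] (μ : Measure α) : Set α :=
  {x | ∀ U : Set α, IsOpen U → x ∈ U → 0 < μ U}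

/-- Mixed volume of an `n`-tuple of sets in `ℝⁿ`, by inclusion–exclusion. -/
def mixedVolume {n : ℕ} (K : Fin n → Set (Euc n)) : ℝ :=
  (∑ I : Finset (Fin n), (-1 : ℝ) ^ (n - I.card) * (volume (∑ i ∈ I, K i)).toReal) / n.factorial

/-- `d`-dimensional mixed volume of a `d`-tuple of sets in `ℝⁿ`, via Hausdorff measure. -/
def mixedVolumeH {n : ℕ} (d : ℕ) (K : Fin d → Set (Euc n)) : ℝ :=
  (∑ I : Finset (Fin d), (-1 : ℝ) ^ (d - I.card) * (μH[d] (∑ i ∈ I, K i)).toReal) / d.factorial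

/-- `S` is the mixed area measure of the tuple `K`. -/
def IsMixedAreaMeasure {m : ℕ} (K : Fin m → Set (Euc (m + 1)))
    (S : Measure (Metric.sphere (0 : Euc (m + 1)) 1)) : Prop :=
  ∀ L : Set (Euc (m + 1)), Convex ℝ L → IsCompact L → L.Nonempty →
    mixedVolume (Fin.snoc K L) = ((m : ℝ) + 1)⁻¹ * ∫ u, suppFn L (u : Euc (m + 1)) ∂S

/-- A tuple of subspaces is semicritical. -/
def SemicriticalSub {n ℓ : ℕ} (V : Fin ℓ → Submodule ℝ (Euc n)) : Prop :=
  ∀ I : Finset (Fin ℓ), I.Nonempty → I.card ≤ Module.finrank ℝ (I.sup V : Submodule ℝ (Euc n))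

end


noncomputable section AuxMacroid
variable {n : ℕ}

lemma bddAbove_inner_image {K : Set (Euc n)} (hK : IsCompact K) (v : Euc n) :
    BddAbove ((fun x => (inner ℝ x v : ℝ)) '' K) :=
  (hK.image (continuous_id.inner continuous_const)).bddAbove

lemma le_suppFn {K : Set (Euc n)} (hK : IsCompact K) {x : Euc n} (hx : x ∈ K) (v : Euc n) :
    (inner ℝ x v : ℝ) ≤ suppFn K v :=
  le_csSup (bddAbove_inner_image hK v) ⟨x, hx, rfl⟩

lemma suppFn_le {K : Set (Euc n)} (hne : K.Nonempty) {v : Euc n} {a : ℝ}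
    (h : ∀ x ∈ K, (inner ℝ x v : ℝ) ≤ a) : suppFn K v ≤ a :=
  csSup_le (hne.image _) (by rintro y ⟨x, hx, rfl⟩; exact h x hx)

lemma exists_mem_suppFn {K : Set (Euc n)} (hK : IsCompact K) (hne : K.Nonempty) (v : Euc n) :
    ∃ x ∈ K, (inner ℝ x v : ℝ) = suppFn K v := by
  obtain ⟨x, hx, hmax⟩ := hK.exists_isMaxOn (f := fun x : Euc n => (inner ℝ x v : ℝ)) hne
    ((continuous_id.inner continuous_const).continuousOn)
  exact ⟨x, hx, le_antisymm (le_suppFn hK hx v) (suppFn_le hne fun y hy => hmax hy)⟩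

lemma two_suppFn_le {K : Set (Euc n)} (hK : IsCompact K) (hne : K.Nonempty) (u z : Euc n) :
    2 * suppFn K u ≤ suppFn K (u + z) + suppFn K (u - z) := by
  obtain ⟨x, hx, hxe⟩ := exists_mem_suppFn hK hne u
  have h1 := le_suppFn hK hx (u + z)
  have h2 := le_suppFn hK hx (u - z)
  have h3 : (inner ℝ x (u + z) : ℝ) + inner ℝ x (u - z) = 2 * inner ℝ x u := by
    rw [inner_add_right, inner_sub_right]; ring
  rw [← hxe]; linarith


/-- The "flatness" reformulation of having a cusp. -/
def Phi {n : ℕ} (K : Set (Euc n)) (c : ℝ) (u : Euc n) : Prop :=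
  ∀ z : Euc n, ‖z‖ ≤ c → suppFn K (u + z) + suppFn K (u - z) ≤ 2 * suppFn K u

lemma mem_vadd_cuspCone {x y : Euc n} {c : ℝ} {u : Euc n} :
    y ∈ x +ᵥ cuspCone c u ↔ (inner ℝ (y - x) u : ℝ) ≤ -c * ‖y - x‖ := by
  constructor
  · rintro ⟨w, hw, rfl⟩
    have h : (x +ᵥ w) - x = w := by simp [vadd_eq_add]
    rw [h]; exact hw
  · intro h
    exact ⟨y - x, h, by simp [vadd_eq_add]⟩

lemma hasCusp_iff_phi {K : Set (Euc n)} (hK : IsCompact K) (hne : K.Nonempty) {c : ℝ}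
    (hc : 0 < c) (u : Euc n) : HasCusp K c u ↔ Phi K c u := by
  constructor
  · rintro ⟨x, hxK, hsub⟩ z hz
    have h1 : suppFn K (u + z) ≤ (inner ℝ x (u + z) : ℝ) := by
      refine suppFn_le hne fun y hy => ?_
      have hw := mem_vadd_cuspCone.1 (hsub hy)
      have hiz : (inner ℝ (y - x) z : ℝ) ≤ ‖y - x‖ * ‖z‖ := real_inner_le_norm _ _
      have : (inner ℝ y (u + z) : ℝ) = inner ℝ x (u + z) + inner ℝ (y - x) u + inner ℝ (y - x) z := by
        simp only [inner_add_right, inner_sub_left]; ring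
      nlinarith [norm_nonneg (y - x)]
    have h2 : suppFn K (u - z) ≤ (inner ℝ x (u - z) : ℝ) := by
      refine suppFn_le hne fun y hy => ?_
      have hw := mem_vadd_cuspCone.1 (hsub hy)
      have hiz : (inner ℝ (y - x) (-z) : ℝ) ≤ ‖y - x‖ * ‖z‖ := by
        simpa [norm_neg] using real_inner_le_norm (y - x) (-z)
      have : (inner ℝ y (u - z) : ℝ) = inner ℝ x (u - z) + inner ℝ (y - x) u + inner ℝ (y - x) (-z) := by
        simp only [inner_sub_right, inner_sub_left, inner_neg_right]; ring
      nlinarith [norm_nonneg (y - x)]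
    have h3 : (2 : ℝ) * inner ℝ x u ≤ 2 * suppFn K u := by
      have := le_suppFn hK hxK u; linarith
    have h4 : (inner ℝ x (u + z) : ℝ) + inner ℝ x (u - z) = 2 * inner ℝ x u := by
      simp only [inner_add_right, inner_sub_right]; ring
    linarith
  · intro hphi
    obtain ⟨x, hxK, hxe⟩ := exists_mem_suppFn hK hne u
    refine ⟨x, hxK, fun y hy => mem_vadd_cuspCone.2 ?_⟩
    set w := y - x with hwdef
    rcases eq_or_ne w 0 with hw0 | hw0
    · simp [hw0]
    · set z : Euc n := (c / ‖w‖) • w with hzdef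
      have hnw : (0:ℝ) < ‖w‖ := norm_pos_iff.2 hw0
      have hzn : ‖z‖ = c := by
        rw [hzdef, norm_smul, Real.norm_eq_abs, abs_of_pos (div_pos hc hnw)]
        field_simp
      have hwz : (inner ℝ w z : ℝ) = c * ‖w‖ := by
        rw [hzdef, real_inner_smul_right, real_inner_self_eq_norm_mul_norm]
        field_simp
      have hP := hphi z (le_of_eq hzn)
      have h5 : (inner ℝ x (u - z) : ℝ) ≤ suppFn K (u - z) := le_suppFn hK hxK (u - z)
      have h6 : (inner ℝ y (u + z) : ℝ) ≤ suppFn K (u + z) := le_suppFn hK hy (u + z)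
      have h7 : (inner ℝ y (u + z) : ℝ) = inner ℝ x (u + z) + inner ℝ w u + inner ℝ w z := by
        simp only [hwdef, inner_add_right, inner_sub_left]; ring
      have h8 : (inner ℝ x (u + z) : ℝ) + inner ℝ x (u - z) = 2 * inner ℝ x u := by
        simp only [inner_add_right, inner_sub_right]; ring
      have : (inner ℝ w u : ℝ) + c * ‖w‖ ≤ 0 := by
        rw [← hwz]; linarith [hxe ▸ hP]
      linarith

lemma suppFn_smul_pos {K : Set (Euc n)} (hK : IsCompact K) (hne : K.Nonempty) {a : ℝ}
    (ha : 0 < a) (v : Euc n) : suppFn K (a • v) = a * suppFn K v := by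
  apply le_antisymm
  · refine suppFn_le hne fun y hy => ?_
    rw [real_inner_smul_right]
    exact mul_le_mul_of_nonneg_left (le_suppFn hK hy v) ha.le
  · have h : suppFn K v ≤ a⁻¹ * suppFn K (a • v) := by
      refine suppFn_le hne fun y hy => ?_
      have := le_suppFn hK hy (a • v)
      rw [real_inner_smul_right] at this
      rw [← mul_le_mul_iff_right₀ ha]
      calc a * (inner ℝ y v : ℝ) ≤ suppFn K (a • v) := this
        _ = a * (a⁻¹ * suppFn K (a • v)) := by field_simp
    calc a * suppFn K v ≤ a * (a⁻¹ * suppFn K (a • v)) :=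
          mul_le_mul_of_nonneg_left h ha.le
      _ = suppFn K (a • v) := by field_simp

/-- From domination of the support function near `u` by a linear function with `x ∈ K`,
we get a cusp. -/
lemma hasCusp_of_dominated {K : Set (Euc n)} (hK : IsCompact K) {x u : Euc n}
    (hxK : x ∈ K) {c : ℝ} (hc : 0 < c)
    (h : ∀ v : Euc n, ‖v - u‖ ≤ c → suppFn K v ≤ (inner ℝ x v : ℝ)) : HasCusp K c u := by
  refine ⟨x, hxK, fun y hy => mem_vadd_cuspCone.2 ?_⟩
  set w := y - x with hwdef
  rcases eq_or_ne w 0 with hw0 | hw0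
  · simp [hw0]
  · have hnw : (0:ℝ) < ‖w‖ := norm_pos_iff.2 hw0
    set v : Euc n := u + (c / ‖w‖) • w with hvdef
    have hvu : ‖v - u‖ = c := by
      rw [hvdef, add_sub_cancel_left, norm_smul, Real.norm_eq_abs,
        abs_of_pos (div_pos hc hnw)]
      field_simp
    have h1 : (inner ℝ y v : ℝ) ≤ inner ℝ x v := (le_suppFn hK hy v).trans (h v hvu.le)
    have h2 : (inner ℝ w v : ℝ) = inner ℝ w u + (c / ‖w‖) * inner ℝ w w := by
      rw [hvdef, inner_add_right, real_inner_smul_right]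
    have h3 : (inner ℝ w w : ℝ) = ‖w‖ * ‖w‖ := real_inner_self_eq_norm_mul_norm w
    have h4 : (inner ℝ w v : ℝ) = inner ℝ y v - inner ℝ x v := by
      rw [hwdef, inner_sub_left]
    have h5 : (c / ‖w‖) * (‖w‖ * ‖w‖) = c * ‖w‖ := by field_simp
    have : (inner ℝ w u : ℝ) + c * ‖w‖ ≤ 0 := by
      rw [← h5, ← h3, ← h2]; rw [h4]; linarith
    linarith

lemma cusp_suppSet_eq {K : Set (Euc n)} (hK : IsCompact K) {x u : Euc n} {c : ℝ} (hc : 0 < c)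
    (hxK : x ∈ K) (hsub : K ⊆ x +ᵥ cuspCone c u) : suppSet K u = {x} := by
  have hxs : (inner ℝ x u : ℝ) = suppFn K u := by
    refine le_antisymm (le_suppFn hK hxK u) (suppFn_le ⟨x, hxK⟩ fun y hy => ?_)
    have hw := mem_vadd_cuspCone.1 (hsub hy)
    have h2 : (inner ℝ y u : ℝ) = inner ℝ x u + inner ℝ (y - x) u := by rw [inner_sub_left]; ring
    nlinarith [norm_nonneg (y - x)]
  ext z
  simp only [suppSet, mem_setOf_eq, mem_singleton_iff]
  constructor
  · rintro ⟨hzK, hz⟩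
    have hw := mem_vadd_cuspCone.1 (hsub hzK)
    have h2 : (inner ℝ (z - x) u : ℝ) = 0 := by
      rw [inner_sub_left, hz, hxs]; ring
    have h3 : c * ‖z - x‖ ≤ 0 := by rw [h2] at hw; linarith
    have hnn := norm_nonneg (z - x)
    have h5 : ‖z - x‖ = 0 := le_antisymm (by nlinarith) hnn
    exact sub_eq_zero.1 (norm_eq_zero.1 h5)
  · rintro rfl; exact ⟨hxK, hxs⟩


lemma face_subset_of_ball_subset {T N : Set (Euc n)} (hface : IsFaceOf T N) {u : Euc n}
    (huT : u ∈ T) {r : ℝ} (hr : 0 < r) (hball : ball u r ⊆ N) : N ⊆ T := by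
  intro a ha
  set ε := r / (2 * (‖u - a‖ + 1)) with hε
  have hApos : (0:ℝ) < ‖u - a‖ + 1 := by positivity
  have hεpos : 0 < ε := by positivity
  set b := u + ε • (u - a) with hb
  have hbmem : b ∈ ball u r := by
    rw [mem_ball, dist_eq_norm]
    have hbu : b - u = ε • (u - a) := by rw [hb]; abel
    rw [hbu, norm_smul, Real.norm_eq_abs, abs_of_pos hεpos]
    have h1 : ‖u - a‖ ≤ ‖u - a‖ + 1 := by linarith
    have h2 : ε * ‖u - a‖ ≤ ε * (‖u - a‖ + 1) :=
      mul_le_mul_of_nonneg_left h1 hεpos.le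
    have h3 : ε * (‖u - a‖ + 1) = r / 2 := by rw [hε]; field_simp
    linarith
  have hu_seg : u ∈ openSegment ℝ a b := by
    have h1ε : (0:ℝ) < 1 + ε := by positivity
    refine ⟨ε / (1 + ε), 1 / (1 + ε), by positivity, by positivity, by field_simp; ring, ?_⟩
    rw [hb]
    match_scalars <;> (field_simp; try ring) <;> try linarith
  exact hface.2.2 a ha b (hball hbmem) ⟨u, huT, hu_seg⟩ (left_mem_segment ℝ a b)

lemma orthIn_eq_of_cusp {K T : Set (Euc n)} (hK : IsCompact K) (hne : K.Nonempty)
    {u : Euc n} (hu : ‖u‖ = 1) (hT : IsTouchingConeIn ⊤ K u T)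
    {c : ℝ} (hc : 0 < c) (hcusp : HasCusp K c u) : orthIn ⊤ T = {0} := by
  obtain ⟨x, hxK, hsub⟩ := hcusp
  have hS : suppSet K u = {x} := cusp_suppSet_eq hK hc hxK hsub
  have hball : ball u c ⊆ normalConeIn ⊤ K (suppSet K u) := by
    intro v hv
    rcases eq_or_ne v 0 with rfl | hv0
    · exact Or.inr rfl
    refine Or.inl ⟨trivial, hv0, ?_⟩
    rw [hS, singleton_subset_iff]
    have hvu : ‖v - u‖ < c := by rw [← dist_eq_norm]; exact mem_ball.1 hv
    refine ⟨hxK, le_antisymm (le_suppFn hK hxK v) (suppFn_le ⟨x, hxK⟩ fun y hy => ?_)⟩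
    have hw := mem_vadd_cuspCone.1 (hsub hy)
    have h2 : (inner ℝ y v : ℝ) = inner ℝ x v + inner ℝ (y - x) u + inner ℝ (y - x) (v - u) := by
      simp only [inner_sub_left, inner_sub_right]; ring
    have h3 : (inner ℝ (y - x) (v - u) : ℝ) ≤ ‖y - x‖ * ‖v - u‖ := real_inner_le_norm _ _
    nlinarith [norm_nonneg (y - x)]
  have huT : u ∈ T := intrinsicInterior_subset hT.2
  have hNT := face_subset_of_ball_subset hT.1 huT hc hball
  ext y
  simp only [orthIn, mem_setOf_eq, mem_singleton_iff]
  constructor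
  · rintro ⟨-, hy⟩
    by_contra hy0
    have hny : (0:ℝ) < ‖y‖ := norm_pos_iff.2 hy0
    set t : Euc n := u + (c / (2 * ‖y‖)) • y with ht
    have htball : t ∈ ball u c := by
      rw [mem_ball, dist_eq_norm]
      have : t - u = (c / (2 * ‖y‖)) • y := by rw [ht]; abel
      rw [this, norm_smul, Real.norm_eq_abs, abs_of_pos (by positivity)]
      rw [div_mul_eq_mul_div, mul_comm]
      rw [div_lt_iff₀ (by positivity)]
      nlinarith
    have htT : t ∈ T := hNT (hball htball)
    have h1 : (inner ℝ y t : ℝ) = 0 := hy t htT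
    have h2 : (inner ℝ y u : ℝ) = 0 := hy u huT
    rw [ht, inner_add_right, real_inner_smul_right, h2,
      real_inner_self_eq_norm_mul_norm] at h1
    have : c / (2 * ‖y‖) * (‖y‖ * ‖y‖) > 0 := by positivity
    linarith
  · rintro rfl
    exact ⟨trivial, fun t _ => inner_zero_left t⟩

lemma exists_cusp_of_orthIn {K T : Set (Euc n)} (hK : IsCompact K) (hne : K.Nonempty)
    {u : Euc n} (hu : ‖u‖ = 1) (hT : IsTouchingConeIn ⊤ K u T)
    (horth : orthIn ⊤ T = {0}) : ∃ c : ℝ, 0 < c ∧ HasCusp K c u := by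
  obtain ⟨hface, hui⟩ := hT
  have huT : u ∈ T := intrinsicInterior_subset hui
  have huN := hface.1 huT
  have hcone : ∀ v ∈ normalConeIn ⊤ K (suppSet K u), ∀ a : ℝ, 0 < a →
      a • v ∈ normalConeIn ⊤ K (suppSet K u) := by
    intro v hv a ha
    rcases hv with ⟨-, hv0, hvs⟩ | hv0
    · refine Or.inl ⟨trivial, smul_ne_zero ha.ne' hv0, fun z hz => ?_⟩
      obtain ⟨hzK, hze⟩ := hvs hz
      exact ⟨hzK, by rw [real_inner_smul_right, hze, suppFn_smul_pos hK hne ha]⟩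
    · simp only [mem_singleton_iff] at hv0
      subst hv0
      exact Or.inr (by simp)
  have h2u : (2:ℝ) • u ∈ normalConeIn ⊤ K (suppSet K u) := hcone u huN 2 (by norm_num)
  have h0N : (0 : Euc n) ∈ normalConeIn ⊤ K (suppSet K u) := Or.inr rfl
  have h0T : (0 : Euc n) ∈ T := by
    have hseg := hface.2.2 0 h0N ((2:ℝ) • u) h2u
      ⟨u, huT, ⟨1/2, 1/2, by norm_num, by norm_num, by norm_num, by match_scalars <;> norm_num⟩⟩
    exact hseg (left_mem_segment ℝ _ _)
  have hspan : Submodule.span ℝ T = ⊤ := by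
    by_contra hne'
    have hbot : (Submodule.span ℝ T)ᗮ ≠ ⊥ := fun h =>
      hne' (Submodule.orthogonal_eq_bot_iff.1 h)
    obtain ⟨y, hy, hy0⟩ := Submodule.exists_mem_ne_zero_of_ne_bot hbot
    have hmem : y ∈ orthIn ⊤ T := by
      refine ⟨trivial, fun t ht => ?_⟩
      rw [real_inner_comm]
      exact (Submodule.mem_orthogonal _ y).1 hy t (Submodule.subset_span ht)
    rw [horth, mem_singleton_iff] at hmem
    exact hy0 hmem
  have haff : affineSpan ℝ T = ⊤ := by
    refine eq_top_iff.2 (SetLike.le_def.2 fun x _ => ?_)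
    have hxdir : x ∈ (affineSpan ℝ T).direction := by
      rw [direction_affineSpan]
      have hle : Submodule.span ℝ T ≤ vectorSpan ℝ T :=
        Submodule.span_le.2 fun t ht => by
          simpa [vsub_eq_sub] using vsub_mem_vectorSpan ℝ ht h0T
      exact hle (hspan ▸ Submodule.mem_top)
    have := AffineSubspace.vadd_mem_of_mem_direction hxdir
      (subset_affineSpan ℝ T h0T)
    simpa [vadd_eq_add] using this
  -- u is in the interior of T
  have hintr : u ∈ interior T := by
    obtain ⟨y, hy, hyu⟩ := hui
    have hsopen : IsOpen ((affineSpan ℝ T : Set (Euc n))) := by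
      rw [haff]
      simp only [AffineSubspace.top_coe]
      exact isOpen_univ
    have hmap := hsopen.isOpenEmbedding_subtypeVal.isOpenMap
    have himg : u ∈ Subtype.val '' interior (Subtype.val ⁻¹' T :
        Set (affineSpan ℝ T : Set (Euc n))) := ⟨y, hy, hyu⟩
    have h2 := hmap.image_interior_subset _ himg
    rw [Subtype.image_preimage_coe] at h2
    refine interior_mono ?_ h2
    exact inter_subset_right
  obtain ⟨r, hr, hrball⟩ := Metric.isOpen_iff.1 isOpen_interior u hintr
  obtain ⟨x, hxK, hxe⟩ := exists_mem_suppFn hK hne u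
  refine ⟨r / 2, by positivity, hasCusp_of_dominated hK hxK (by positivity) ?_⟩
  intro v hv
  have hvball : v ∈ ball u r := by
    rw [mem_ball, dist_eq_norm]; linarith
  have hvN : v ∈ normalConeIn ⊤ K (suppSet K u) :=
    hface.1 (interior_subset (hrball hvball))
  rcases hvN with ⟨-, hv0, hvs⟩ | hv0
  · exact le_of_eq (hvs ⟨hxK, hxe⟩).2.symm
  · simp only [mem_singleton_iff] at hv0
    subst hv0
    refine suppFn_le hne fun y hy => ?_
    rw [inner_zero_right]
    rw [inner_zero_right]


lemma secondCountable_convexBody :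
    SecondCountableTopology (ConvexBody (Euc n)) := by
  have hiso : Isometry (fun K : ConvexBody (Euc n) =>
      (⟨⟨(K : Set (Euc n)), K.isCompact⟩, K.nonempty⟩ : TopologicalSpace.NonemptyCompacts (Euc n))) := by
    intro K L
    rw [← ConvexBody.hausdorffEdist_coe]
    rfl
  exact hiso.isEmbedding.secondCountableTopology

lemma measure_compl_measSupport [MeasurableSpace (ConvexBody (Euc n))]
    [BorelSpace (ConvexBody (Euc n))] (μ : Measure (ConvexBody (Euc n))) :
    μ (measSupport μ)ᶜ = 0 := by
  haveI := secondCountable_convexBody (n := n)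
  have hcompl : (measSupport μ)ᶜ = ⋃₀ {U : Set (ConvexBody (Euc n)) | IsOpen U ∧ μ U = 0} := by
    ext x
    simp only [mem_compl_iff, measSupport, mem_setOf_eq, not_forall, mem_sUnion]
    constructor
    · rintro ⟨U, hU, hxU, hμ⟩
      exact ⟨U, ⟨hU, le_antisymm (not_lt.1 hμ) (zero_le)⟩, hxU⟩
    · rintro ⟨U, ⟨hU, hμ⟩, hxU⟩
      exact ⟨U, hU, hxU, by simp [hμ]⟩
  obtain ⟨S, hScnt, hSsub, hSeq⟩ := TopologicalSpace.isOpen_sUnion_countable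
    {U : Set (ConvexBody (Euc n)) | IsOpen U ∧ μ U = 0} (fun s hs => hs.1)
  rw [hcompl, ← hSeq]
  exact (measure_sUnion_null_iff hScnt).2 fun s hs => (hSsub hs).2

lemma lipschitz_suppFn (v : Euc n) :
    LipschitzWith ‖v‖₊ (fun P : ConvexBody (Euc n) => suppFn (P : Set (Euc n)) v) := by
  have key : ∀ P Q : ConvexBody (Euc n),
      suppFn (P : Set (Euc n)) v ≤ suppFn (Q : Set (Euc n)) v + dist P Q * ‖v‖ := by
    intro P Q
    refine csSup_le ((P.nonempty.image _)) ?_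
    rintro r ⟨x, hx, rfl⟩
    show (inner ℝ x v : ℝ) ≤ _
    obtain ⟨y, hy, hdy⟩ := Q.isCompact.exists_infDist_eq_dist Q.nonempty x
    have h1 : dist x y ≤ dist P Q := by
      rw [← hdy, ← ConvexBody.hausdorffDist_coe]
      exact Metric.infDist_le_hausdorffDist_of_mem hx ConvexBody.hausdorffEdist_ne_top
    have h2 : (inner ℝ x v : ℝ) = inner ℝ y v + inner ℝ (x - y) v := by
      rw [inner_sub_left]; ring
    have h3 : (inner ℝ (x - y) v : ℝ) ≤ ‖x - y‖ * ‖v‖ := real_inner_le_norm _ _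
    have h4 : ‖x - y‖ = dist x y := (dist_eq_norm x y).symm
    have h5 : (inner ℝ y v : ℝ) ≤ suppFn (Q : Set (Euc n)) v :=
      le_csSup ((Q.isCompact.image (continuous_id.inner continuous_const)).bddAbove) ⟨y, hy, rfl⟩
    have h6 : dist x y * ‖v‖ ≤ dist P Q * ‖v‖ :=
      mul_le_mul_of_nonneg_right h1 (norm_nonneg v)
    rw [h2]
    rw [h4] at h3
    linarith
  refine LipschitzWith.of_dist_le_mul fun P Q => ?_
  rw [Real.dist_eq, abs_sub_le_iff]
  constructor
  · have := key P Q; rw [coe_nnnorm]; linarith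
  · have := key Q P; rw [coe_nnnorm, dist_comm P Q] at *; linarith


variable [MeasurableSpace (ConvexBody (Euc n))] [BorelSpace (ConvexBody (Euc n))]
  (μ : Measure (ConvexBody (Euc n))) [IsProbabilityMeasure μ]

lemma measSupport_nonempty : (measSupport μ).Nonempty := by
  rcases eq_empty_or_nonempty (measSupport μ) with h | h
  · exfalso
    have h0 := measure_compl_measSupport μ
    rw [h, compl_empty] at h0
    simp [measure_univ] at h0
  · exact h

lemma exists_unif_bound (hbdd : Bornology.IsBounded (measSupport μ)) :
    ∃ C : ℝ, 0 ≤ C ∧ ∀ P ∈ measSupport μ, ∀ x ∈ (P : Set (Euc n)), ‖x‖ ≤ C := by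
  obtain ⟨P₀, hP₀⟩ := measSupport_nonempty μ
  obtain ⟨r, hr⟩ := hbdd.subset_closedBall P₀
  obtain ⟨C₀, hC₀pos, hC₀⟩ := P₀.isBounded.exists_pos_norm_le
  refine ⟨C₀ + max r 0, by positivity, fun P hP x hx => ?_⟩
  obtain ⟨y, hy, hdy⟩ := P₀.isCompact.exists_infDist_eq_dist P₀.nonempty x
  have h1 : dist x y ≤ dist P P₀ := by
    rw [← hdy, ← ConvexBody.hausdorffDist_coe]
    exact Metric.infDist_le_hausdorffDist_of_mem hx ConvexBody.hausdorffEdist_ne_top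
  have h2 : dist P P₀ ≤ r := by simpa [Metric.mem_closedBall] using hr hP
  calc ‖x‖ ≤ ‖y‖ + dist x y := by
        rw [dist_eq_norm]
        simpa using norm_add_le y (x - y)
    _ ≤ C₀ + max r 0 := add_le_add (hC₀ y hy) (h1.trans (h2.trans (le_max_left _ _)))

set_option synthInstance.maxHeartbeats 1000000 in
lemma integrable_suppFn (hbdd : Bornology.IsBounded (measSupport μ)) (v : Euc n) :
    Integrable (fun P : ConvexBody (Euc n) => suppFn (P : Set (Euc n)) v) μ := by
  obtain ⟨C, hC0, hC⟩ := exists_unif_bound μ hbdd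
  have hmeas := (lipschitz_suppFn (n := n) v).continuous.aestronglyMeasurable (μ := μ)
  refine Integrable.mono' (integrable_const (C * ‖v‖)) hmeas ?_
  have hae : ∀ᵐ P ∂μ, P ∈ measSupport μ := by
    rw [MeasureTheory.ae_iff]
    exact measure_compl_measSupport μ
  refine hae.mono fun P hP => ?_
  rw [Real.norm_eq_abs, abs_le]
  constructor
  · obtain ⟨x₀, hx₀⟩ := P.nonempty
    have := le_suppFn P.isCompact hx₀ v
    have h2 : |(inner ℝ x₀ v : ℝ)| ≤ ‖x₀‖ * ‖v‖ := abs_real_inner_le_norm _ _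
    have h3 : ‖x₀‖ * ‖v‖ ≤ C * ‖v‖ := mul_le_mul_of_nonneg_right (hC P hP x₀ hx₀) (norm_nonneg v)
    have := abs_le.1 h2
    linarith [this.1]
  · refine suppFn_le P.nonempty fun x hx => ?_
    have h2 : |(inner ℝ x v : ℝ)| ≤ ‖x‖ * ‖v‖ := abs_real_inner_le_norm _ _
    have h3 : ‖x‖ * ‖v‖ ≤ C * ‖v‖ := mul_le_mul_of_nonneg_right (hC P hP x hx) (norm_nonneg v)
    linarith [(abs_le.1 h2).2]

lemma phi_transfer (hbdd : Bornology.IsBounded (measSupport μ))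
    {K : Set (Euc n)} (hKcomp : IsCompact K) (hKne : K.Nonempty)
    (hgen : ∀ x : Euc n, suppFn K x = ∫ P, suppFn (P : Set (Euc n)) x ∂μ)
    (c : ℝ) (u : Euc n) :
    Phi K c u ↔ ∀ P ∈ measSupport μ, Phi (P : Set (Euc n)) c u := by
  have hint : ∀ z : Euc n, Integrable (fun P : ConvexBody (Euc n) =>
      suppFn (P : Set (Euc n)) (u + z) + suppFn (P : Set (Euc n)) (u - z)
        - 2 * suppFn (P : Set (Euc n)) u) μ := fun z =>
    ((integrable_suppFn μ hbdd (u + z)).add (integrable_suppFn μ hbdd (u - z))).sub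
      ((integrable_suppFn μ hbdd u).const_mul 2)
  have hgnn : ∀ z : Euc n, ∀ P : ConvexBody (Euc n),
      0 ≤ suppFn (P : Set (Euc n)) (u + z) + suppFn (P : Set (Euc n)) (u - z)
        - 2 * suppFn (P : Set (Euc n)) u := fun z P => by
    have := two_suppFn_le P.isCompact P.nonempty u z; linarith
  have hI : ∀ z : Euc n, (∫ P, (suppFn (P : Set (Euc n)) (u + z) + suppFn (P : Set (Euc n)) (u - z)
        - 2 * suppFn (P : Set (Euc n)) u) ∂μ)
      = suppFn K (u + z) + suppFn K (u - z) - 2 * suppFn K u := fun z => by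
    have h1 := integrable_suppFn μ hbdd (u + z)
    have h2 := integrable_suppFn μ hbdd (u - z)
    have h3 := integrable_suppFn μ hbdd u
    have hadd : Integrable (fun P : ConvexBody (Euc n) =>
        suppFn (P : Set (Euc n)) (u + z) + suppFn (P : Set (Euc n)) (u - z)) μ := h1.add h2
    have hmul : Integrable (fun P : ConvexBody (Euc n) =>
        2 * suppFn (P : Set (Euc n)) u) μ := h3.const_mul 2
    rw [integral_sub (f := fun P : ConvexBody (Euc n) =>
          suppFn (P : Set (Euc n)) (u + z) + suppFn (P : Set (Euc n)) (u - z))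
        (g := fun P : ConvexBody (Euc n) => 2 * suppFn (P : Set (Euc n)) u) hadd hmul,
      integral_add (f := fun P : ConvexBody (Euc n) => suppFn (P : Set (Euc n)) (u + z))
        (g := fun P : ConvexBody (Euc n) => suppFn (P : Set (Euc n)) (u - z)) h1 h2,
      MeasureTheory.integral_const_mul, ← hgen, ← hgen, ← hgen]
  constructor
  · intro hphi P hP z hz
    have hle : (∫ P, (suppFn (P : Set (Euc n)) (u + z) + suppFn (P : Set (Euc n)) (u - z)
        - 2 * suppFn (P : Set (Euc n)) u) ∂μ) = 0 := by
      rw [hI z]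
      have h1 := hphi z hz
      have h2 := two_suppFn_le hKcomp hKne u z
      linarith
    have hae0 := (integral_eq_zero_iff_of_nonneg (fun P => hgnn z P) (hint z)).1 hle
    have hopen : IsOpen {Q : ConvexBody (Euc n) | ¬ (suppFn (Q : Set (Euc n)) (u + z)
        + suppFn (Q : Set (Euc n)) (u - z) - 2 * suppFn (Q : Set (Euc n)) u = 0)} := by
      have hcont : Continuous (fun Q : ConvexBody (Euc n) =>
          suppFn (Q : Set (Euc n)) (u + z) + suppFn (Q : Set (Euc n)) (u - z)
            - 2 * suppFn (Q : Set (Euc n)) u) :=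
        (((lipschitz_suppFn (u + z)).continuous.add
          (lipschitz_suppFn (u - z)).continuous).sub
            (continuous_const.mul (lipschitz_suppFn u).continuous))
      exact (isClosed_eq hcont continuous_const).isOpen_compl
    have hμ0 : μ {Q : ConvexBody (Euc n) | ¬ (suppFn (Q : Set (Euc n)) (u + z)
        + suppFn (Q : Set (Euc n)) (u - z) - 2 * suppFn (Q : Set (Euc n)) u = 0)} = 0 := by
      have := hae0
      rw [Filter.EventuallyEq, MeasureTheory.ae_iff] at this
      simpa using this
    by_contra hlt
    push_neg at hlt
    have heq0 : suppFn (P : Set (Euc n)) (u + z) + suppFn (P : Set (Euc n)) (u - z)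
        - 2 * suppFn (P : Set (Euc n)) u = 0 := by
      by_contra hne0
      have := hP _ hopen hne0
      rw [hμ0] at this
      exact lt_irrefl 0 this
    linarith
  · intro hsupp z hz
    have hae : ∀ᵐ P ∂μ, P ∈ measSupport μ := by
      rw [MeasureTheory.ae_iff]; exact measure_compl_measSupport μ
    have hle : (∫ P, (suppFn (P : Set (Euc n)) (u + z) + suppFn (P : Set (Euc n)) (u - z)
        - 2 * suppFn (P : Set (Euc n)) u) ∂μ) ≤ 0 := by
      refine integral_nonpos_of_ae (hae.mono fun P hP => ?_)
      have := hsupp P hP z hz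
      simp only [Pi.zero_apply]
      linarith
    rw [hI z] at hle
    linarith

end AuxMacroid

/-- The touching space of a macroid in direction `u` is nontrivial iff for every `c > 0` some
body in the support of the generating measure fails to have a `c`-cusp in direction `u`. -/
theorem macroid_touchingSpace_nontrivial_iff {n : ℕ}
    [MeasurableSpace (ConvexBody (Euc n))] [BorelSpace (ConvexBody (Euc n))]
    (μ : Measure (ConvexBody (Euc n))) [IsProbabilityMeasure μ]
    (hbdd : Bornology.IsBounded (measSupport μ))
    (K : Set (Euc n)) (hKconv : Convex ℝ K) (hKcomp : IsCompact K) (hKne : K.Nonempty)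
    (hgen : ∀ x : Euc n, suppFn K x = ∫ P, suppFn (P : Set (Euc n)) x ∂μ)
    (u : Euc n) (hu : ‖u‖ = 1)
    (T : Set (Euc n)) (hT : IsTouchingConeIn ⊤ K u T) :
    orthIn ⊤ T ≠ {0} ↔
      ∀ c : ℝ, 0 < c → ∃ P ∈ measSupport μ, ¬ HasCusp (P : Set (Euc n)) c u := by
  have key : orthIn ⊤ T = {0} ↔
      ∃ c : ℝ, 0 < c ∧ ∀ P ∈ measSupport μ, HasCusp (P : Set (Euc n)) c u := by
    constructor
    · intro h
      obtain ⟨c, hc, hcusp⟩ := exists_cusp_of_orthIn hKcomp hKne hu hT h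
      refine ⟨c, hc, fun P hP => ?_⟩
      rw [hasCusp_iff_phi P.isCompact P.nonempty hc u]
      exact (phi_transfer μ hbdd hKcomp hKne hgen c u).1
        ((hasCusp_iff_phi hKcomp hKne hc u).1 hcusp) P hP
    · rintro ⟨c, hc, hall⟩
      have hphiK : Phi K c u := (phi_transfer μ hbdd hKcomp hKne hgen c u).2
        (fun P hP => (hasCusp_iff_phi P.isCompact P.nonempty hc u).1 (hall P hP))
      exact orthIn_eq_of_cusp hKcomp hKne hu hT hc
        ((hasCusp_iff_phi hKcomp hKne hc u).2 hphiK)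
  constructor
  · intro hne c hc
    by_contra hno
    push_neg at hno
    exact hne (key.2 ⟨c, hc, hno⟩)
  · intro hall heq
    obtain ⟨c, hc, hcusp⟩ := key.1 heq
    obtain ⟨P, hP, hnc⟩ := hall c hc
    exact hnc (hcusp P hP)
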